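/- Let (X,d) be a compact metric space, f_{1,∞} an NDS on X, ψ ∈ C(X,ℝ), μ a Borel probability measure on X, Z ⊆ X, and s ∈ ℝ. If P_μ(x,ψ) ≥ s for every x ∈ Z and μ(Z) > 0, then P^B_{f_{1,∞}}(Z,ψ) ≥ s and P^W_{f_{1,∞}}(Z,ψ) ≥ s. -/

import Mathlib

open Filter MeasureTheory Set ENNReal

noncomputable section

variable {X : Type} [MetricSpace X]

/-- The iterate `f_1^n = f_n ∘ ⋯ ∘ f_1` of the NDS `f`, where `f 0` is the first map `f_1`. -/
def nIter (f : ℕ → X → X) : ℕ → X → X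
  | 0 => id
  | n + 1 => f n ∘ nIter f n

/-- The Bowen (dynamical) ball `B_n(x, ε)` for the Bowen metric
`d_n(x,y) = max_{0 ≤ j < n} d(f_1^j x, f_1^j y)`. -/
def bowenBall (f : ℕ → X → X) (n : ℕ) (x : X) (ε : ℝ) : Set X :=
  {y | ∀ j < n, dist (nIter f j x) (nIter f j y) < ε}

/-- The Birkhoff sum `S_{1,n} ψ (x) = ∑_{j=0}^{n-1} ψ(f_1^j x)`. -/
def birkSum (f : ℕ → X → X) (ψ : X → ℝ) (n : ℕ) (x : X) : ℝ :=
  ∑ j ∈ Finset.range n, ψ (nIter f j x)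

/-- `S_{1,n} ψ (x, ε) = sup_{y ∈ B_n(x,ε)} S_{1,n} ψ (y)`. -/
def birkSupBall (f : ℕ → X → X) (ψ : X → ℝ) (n : ℕ) (x : X) (ε : ℝ) : ℝ :=
  sSup (birkSum f ψ n '' bowenBall f n x ε)

/-- `M(n, α, ε, Z, ψ)`: infimum of `∑_i exp(-α n_i + S_{1,n_i}ψ(x_i, ε))` over all finite or
countable covers `Z ⊆ ⋃_i B_{n_i}(x_i, ε)` with `n_i ≥ n`. -/
def Mpre (f : ℕ → X → X) (ψ : X → ℝ) (Z : Set X) (n : ℕ) (α ε : ℝ) : ℝ≥0∞ :=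
  sInf { S : ℝ≥0∞ | ∃ (u : Set ℕ) (c : ℕ → X) (m : ℕ → ℕ),
    (∀ i ∈ u, n ≤ m i) ∧ (Z ⊆ ⋃ i ∈ u, bowenBall f (m i) (c i) ε) ∧
    S = ∑' i : u, ENNReal.ofReal (Real.exp (-α * (m i : ℝ) + birkSupBall f ψ (m i) (c i) ε)) }

/-- `𝓜(n, α, ε, Z, ψ)`: as `Mpre` but with the Birkhoff sums evaluated at the centers. -/
def MpreC (f : ℕ → X → X) (ψ : X → ℝ) (Z : Set X) (n : ℕ) (α ε : ℝ) : ℝ≥0∞ :=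
  sInf { S : ℝ≥0∞ | ∃ (u : Set ℕ) (c : ℕ → X) (m : ℕ → ℕ),
    (∀ i ∈ u, n ≤ m i) ∧ (Z ⊆ ⋃ i ∈ u, bowenBall f (m i) (c i) ε) ∧
    S = ∑' i : u, ENNReal.ofReal (Real.exp (-α * (m i : ℝ) + birkSum f ψ (m i) (c i))) }

/-- `M(α, ε, Z, ψ) = lim_{n→∞} M(n, α, ε, Z, ψ)`; the quantity is nondecreasing in `n`,
so the limit is the supremum. -/
def Mlim (f : ℕ → X → X) (ψ : X → ℝ) (Z : Set X) (α ε : ℝ) : ℝ≥0∞ :=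
  ⨆ n : ℕ, Mpre f ψ Z n α ε

/-- `𝓜(α, ε, Z, ψ) = lim_{n→∞} 𝓜(n, α, ε, Z, ψ)`. -/
def MlimC (f : ℕ → X → X) (ψ : X → ℝ) (Z : Set X) (α ε : ℝ) : ℝ≥0∞ :=
  ⨆ n : ℕ, MpreC f ψ Z n α ε

/-- `P^B(ε, Z, ψ) = inf {α : M(α, ε, Z, ψ) = 0}`, as an extended real. -/
def PBeps (f : ℕ → X → X) (ψ : X → ℝ) (Z : Set X) (ε : ℝ) : EReal :=
  sInf (Real.toEReal '' {α : ℝ | Mlim f ψ Z α ε = 0})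

/-- `𝒫^B(ε, Z, ψ) = inf {α : 𝓜(α, ε, Z, ψ) = 0}`. -/
def PBCeps (f : ℕ → X → X) (ψ : X → ℝ) (Z : Set X) (ε : ℝ) : EReal :=
  sInf (Real.toEReal '' {α : ℝ | MlimC f ψ Z α ε = 0})

/-- The Pesin–Pitskel topological pressure `P^B_{f_{1,∞}}(Z, ψ) = lim_{ε→0} P^B(ε, Z, ψ)`. -/
def PB (f : ℕ → X → X) (ψ : X → ℝ) (Z : Set X) : EReal :=
  limUnder (nhdsWithin 0 (Ioi 0)) fun ε : ℝ => PBeps f ψ Z ε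

/-- `W(n, α, ε, Z, ψ)`: the weighted analogue of `Mpre`. -/
def Wpre (f : ℕ → X → X) (ψ : X → ℝ) (Z : Set X) (n : ℕ) (α ε : ℝ) : ℝ≥0∞ :=
  sInf { S : ℝ≥0∞ | ∃ (u : Set ℕ) (cx : ℕ → X) (m : ℕ → ℕ) (c : ℕ → ℝ),
    (∀ i ∈ u, 0 < c i) ∧ (∀ i ∈ u, n ≤ m i) ∧
    (∀ z ∈ Z, 1 ≤ ∑' i : u,
      (bowenBall f (m i) (cx i) ε).indicator (fun _ => ENNReal.ofReal (c i)) z) ∧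
    S = ∑' i : u, ENNReal.ofReal (c i) *
      ENNReal.ofReal (Real.exp (-α * (m i : ℝ) + birkSupBall f ψ (m i) (cx i) ε)) }

/-- `W(α, ε, Z, ψ) = lim_{n→∞} W(n, α, ε, Z, ψ)`. -/
def Wlim (f : ℕ → X → X) (ψ : X → ℝ) (Z : Set X) (α ε : ℝ) : ℝ≥0∞ :=
  ⨆ n : ℕ, Wpre f ψ Z n α ε

/-- `P^W(ε, Z, ψ)`: the critical value of `α` at which `W(α, ε, Z, ψ)` jumps from `∞` to `0`. -/
def PWeps (f : ℕ → X → X) (ψ : X → ℝ) (Z : Set X) (ε : ℝ) : EReal :=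
  sInf (Real.toEReal '' {α : ℝ | Wlim f ψ Z α ε = 0})

/-- The weighted topological pressure `P^W_{f_{1,∞}}(Z, ψ) = lim_{ε→0} P^W(ε, Z, ψ)`. -/
def PW (f : ℕ → X → X) (ψ : X → ℝ) (Z : Set X) : EReal :=
  limUnder (nhdsWithin 0 (Ioi 0)) fun ε : ℝ => PWeps f ψ Z ε

/-- Bowen topological entropy `h^B_top(f_{1,∞}, Z)`, i.e. pressure of the zero potential. -/
def hBtop (f : ℕ → X → X) (Z : Set X) : EReal := PB f (fun _ => 0) Z

/-- Weighted Bowen topological entropy `h^{WB}_top(f_{1,∞}, Z)`. -/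
def hWBtop (f : ℕ → X → X) (Z : Set X) : EReal := PW f (fun _ => 0) Z

/-- `EReal → ℝ≥0∞`, sending `⊤` to `⊤` and everything negative to `0`. -/
def ERealToENNReal (x : EReal) : ℝ≥0∞ := if x = ⊤ then ⊤ else ENNReal.ofReal x.toReal

variable [MeasurableSpace X]

/-- The measure-theoretic local pressure
`P_μ(x,ψ) = lim_{ε→0} liminf_{n→∞} (-log μ(B_n(x,ε)) + S_{1,n}ψ(x))/n`. -/
def Ploc (f : ℕ → X → X) (μ : Measure X) (ψ : X → ℝ) (x : X) : EReal :=
  limUnder (nhdsWithin 0 (Ioi 0)) fun ε : ℝ =>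
    Filter.atTop.liminf fun n : ℕ =>
      (((n : ℝ)⁻¹ : ℝ) : EReal) *
        (-(ENNReal.log (μ (bowenBall f n x ε))) + ((birkSum f ψ n x : ℝ) : EReal))

/-- The integral of an extended-real-valued function: the difference of the lower integrals of
its positive and negative parts. -/
def ERealIntegral (μ : Measure X) (g : X → EReal) : EReal :=
  ((∫⁻ x, ERealToENNReal (g x) ∂μ : ℝ≥0∞) : EReal)
    - ((∫⁻ x, ERealToENNReal (-(g x)) ∂μ : ℝ≥0∞) : EReal)

/-- The measure-theoretic pressure `P_μ(X, ψ) = ∫ P_μ(x, ψ) dμ(x)`. -/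
def Pmeas (f : ℕ → X → X) (μ : Measure X) (ψ : X → ℝ) : EReal :=
  ERealIntegral μ (Ploc f μ ψ)

/-- The measure-theoretic local lower entropy `h̲_μ(f_{1,∞}, x)`. -/
def hloc (f : ℕ → X → X) (μ : Measure X) (x : X) : EReal := Ploc f μ (fun _ => 0) x

/-- The measure-theoretic lower entropy `h̲_μ(f_{1,∞}) = ∫ h̲_μ(f_{1,∞}, x) dμ(x)`. -/
def hmeas (f : ℕ → X → X) (μ : Measure X) : EReal := Pmeas f μ (fun _ => 0)


end

/-!
Fix `c < s`. Each `x ∈ Z` has a radius `ε` with `μ(B_n(x, ε)) ≤ exp(-c n + S_{1,n}ψ(x))` for all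
large `n`, so by countable additivity some `Z₀ ⊆ Z` with `μ Z₀ > 0` admits one radius `ε₀` and
one threshold `N` for all its points. A Bowen ball `B_n(x, ε)` with `2ε ≤ ε₀` that meets `Z₀`
at `z` lies in `B_n(z, ε₀)`; integrating a weighted cover of `Z` against `μ` (mass distribution
principle) then gives `W(N, α, ε, Z, ψ) ≥ μ Z₀ > 0` for `α ≤ c`, so `P^W(ε, Z, ψ) ≥ c`, and
`P^B ≥ P^W` because covers are weighted covers.

The limits `ε → 0` exist: by uniform continuity of `ψ`, `P^B(ε)` and `P^W(ε)` are squeezed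
between their variants with Birkhoff sums at the centres, which are antitone in `ε`, and these
variants plus an arbitrarily small constant.
-/

open Topology

section BowenBall

variable {X : Type} [MetricSpace X] {f : ℕ → X → X} {ψ : X → ℝ} {n : ℕ} {x y : X}
  {ε ε' η : ℝ}

theorem mem_bowenBall_self (hε : 0 < ε) : x ∈ bowenBall f n x ε :=
  fun j _ => by simpa using hε

theorem bowenBall_mono (h : ε ≤ ε') : bowenBall f n x ε ⊆ bowenBall f n x ε' :=
  fun _ hy j hj => (hy j hj).trans_le h

theorem bowenBall_subset_bowenBall_two_mul (hy : y ∈ bowenBall f n x ε) :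
    bowenBall f n x ε ⊆ bowenBall f n y (2 * ε) := by
  intro z hz j hj
  calc dist (nIter f j y) (nIter f j z)
      ≤ dist (nIter f j x) (nIter f j y) + dist (nIter f j x) (nIter f j z) :=
        dist_triangle_left _ _ _
    _ < 2 * ε := by linarith [hy j hj, hz j hj]

theorem birkSum_le_birkSupBall (hψ : BddAbove (range ψ)) (hy : y ∈ bowenBall f n x ε) :
    birkSum f ψ n y ≤ birkSupBall f ψ n x ε := by
  obtain ⟨C, hC⟩ := hψ
  refine le_csSup ⟨n * C, ?_⟩ (mem_image_of_mem _ hy)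
  rintro _ ⟨z, -, rfl⟩
  calc birkSum f ψ n z ≤ ∑ _j ∈ Finset.range n, C :=
        Finset.sum_le_sum fun j _ => hC (mem_range_self _)
    _ = n * C := by simp

theorem birkSupBall_le_birkSum_add (hε : 0 < ε)
    (hψ : ∀ a b, dist a b < ε → ψ b ≤ ψ a + η) :
    birkSupBall f ψ n x ε ≤ birkSum f ψ n x + n * η := by
  refine csSup_le ⟨_, mem_image_of_mem _ (mem_bowenBall_self hε)⟩ ?_
  rintro _ ⟨y, hy, rfl⟩
  calc birkSum f ψ n y ≤ ∑ j ∈ Finset.range n, (ψ (nIter f j x) + η) :=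
        Finset.sum_le_sum fun j hj => hψ _ _ (hy j (Finset.mem_range.1 hj))
    _ = birkSum f ψ n x + n * η := by simp [birkSum, Finset.sum_add_distrib]

theorem eventually_birkSupBall_le_birkSum_add (hψ : UniformContinuous ψ) (hη : 0 < η) :
    ∀ᶠ ε in 𝓝[>] 0, ∀ n x, birkSupBall f ψ n x ε ≤ birkSum f ψ n x + n * η := by
  obtain ⟨δ, hδ, hψδ⟩ := Metric.uniformContinuous_iff.1 hψ η hη
  filter_upwards [Ioo_mem_nhdsGT hδ] with ε hε n x
  refine birkSupBall_le_birkSum_add hε.1 fun a b hab => ?_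
  have := hψδ (hab.trans hε.2)
  rw [Real.dist_eq] at this
  linarith [abs_lt.1 this]

end BowenBall

section CriticalValue

/- `PBeps f ψ Z ε`, `PBCeps f ψ Z ε` and `PWeps f ψ Z ε` unfold to `critValue` of `Mlim`,
`MlimC` and `Wlim` at fixed `ε`. -/
noncomputable def critValue (L : ℝ → ℝ≥0∞) : EReal :=
  sInf (Real.toEReal '' {α | L α = 0})

variable {L L' : ℝ → ℝ≥0∞}

theorem critValue_mono (h : ∀ α, L' α ≤ L α) : critValue L' ≤ critValue L :=
  sInf_le_sInf (image_mono fun α hα => le_zero_iff.1 ((h α).trans (le_of_eq hα)))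

theorem critValue_le_add {η : ℝ} (h : ∀ α, L (α + η) ≤ L' α) :
    critValue L ≤ critValue L' + η := by
  have h₁ : (η : EReal) ≠ ⊥ := EReal.coe_ne_bot η
  have h₂ : (η : EReal) ≠ ⊤ := EReal.coe_ne_top η
  rw [← EReal.sub_le_iff_le_add (.inl h₁) (.inl h₂)]
  refine le_sInf ?_
  rintro _ ⟨β, hβ, rfl⟩
  rw [EReal.sub_le_iff_le_add (.inl h₁) (.inl h₂), ← EReal.coe_add]
  exact sInf_le (mem_image_of_mem _ (le_zero_iff.1 ((h β).trans (le_of_eq hβ))))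

theorem tendsto_critValue {L LC : ℝ → ℝ → ℝ≥0∞}
    (hLC : ∀ ε > 0, ∀ α, LC ε α ≤ L ε α)
    (hL : ∀ η > 0, ∀ᶠ ε in 𝓝[>] 0, ∀ α, L ε (α + η) ≤ LC ε α)
    (hanti : ∀ α, Antitone fun ε => LC ε α) :
    Tendsto (fun ε => critValue (L ε)) (𝓝[>] 0)
      (𝓝 (sSup ((fun ε => critValue (LC ε)) '' Ioi 0))) := by
  have hC : Tendsto (fun ε => critValue (LC ε)) (𝓝[>] 0)
      (𝓝 (sSup ((fun ε => critValue (LC ε)) '' Ioi 0))) :=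
    Antitone.tendsto_nhdsGT (fun _ _ h => critValue_mono fun α => hanti α h) 0
  refine tendsto_order.2 ⟨fun a ha => ?_, fun b hb => ?_⟩
  · filter_upwards [hC.eventually (eventually_gt_nhds ha), self_mem_nhdsWithin] with ε haε hε
    exact haε.trans_le (critValue_mono (hLC ε hε))
  · obtain ⟨y, hy, hyb⟩ := EReal.exists_between_coe_real hb
    obtain ⟨z, hyz, hzb⟩ := EReal.exists_between_coe_real hyb
    have hη : 0 < z - y := sub_pos.2 (EReal.coe_lt_coe_iff.1 hyz)
    filter_upwards [hL _ hη, self_mem_nhdsWithin] with ε hε hεpos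
    calc critValue (L ε) ≤ critValue (LC ε) + ((z - y : ℝ) : EReal) := critValue_le_add hε
      _ ≤ y + ((z - y : ℝ) : EReal) := by
        gcongr
        exact (le_sSup (mem_image_of_mem _ hεpos)).trans hy.le
      _ = z := by rw [← EReal.coe_add, add_sub_cancel]
      _ < b := hzb

end CriticalValue

section CoverInf

variable {X : Type} [MetricSpace X]

noncomputable def coverInf (f : ℕ → X → X) (Z : Set X) (n : ℕ) (ε : ℝ) (g : ℕ → X → ℝ) :
    ℝ≥0∞ :=
  sInf { S : ℝ≥0∞ | ∃ (u : Set ℕ) (c : ℕ → X) (m : ℕ → ℕ),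
    (∀ i ∈ u, n ≤ m i) ∧ (Z ⊆ ⋃ i ∈ u, bowenBall f (m i) (c i) ε) ∧
    S = ∑' i : u, ENNReal.ofReal (Real.exp (g (m i) (c i))) }

noncomputable def weightedCoverInf (f : ℕ → X → X) (Z : Set X) (n : ℕ) (ε : ℝ)
    (g : ℕ → X → ℝ) : ℝ≥0∞ :=
  sInf { S : ℝ≥0∞ | ∃ (u : Set ℕ) (cx : ℕ → X) (m : ℕ → ℕ) (c : ℕ → ℝ),
    (∀ i ∈ u, 0 < c i) ∧ (∀ i ∈ u, n ≤ m i) ∧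
    (∀ z ∈ Z, 1 ≤ ∑' i : u,
      (bowenBall f (m i) (cx i) ε).indicator (fun _ => ENNReal.ofReal (c i)) z) ∧
    S = ∑' i : u, ENNReal.ofReal (c i) * ENNReal.ofReal (Real.exp (g (m i) (cx i))) }

variable {f : ℕ → X → X} {ψ : X → ℝ} {Z : Set X} {n : ℕ} {α ε ε' : ℝ} {g g' : ℕ → X → ℝ}

theorem Mpre_eq_coverInf :
    Mpre f ψ Z n α ε = coverInf f Z n ε fun m x => -α * m + birkSupBall f ψ m x ε :=
  rfl

theorem MpreC_eq_coverInf :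
    MpreC f ψ Z n α ε = coverInf f Z n ε fun m x => -α * m + birkSum f ψ m x :=
  rfl

theorem Wpre_eq_weightedCoverInf :
    Wpre f ψ Z n α ε = weightedCoverInf f Z n ε fun m x => -α * m + birkSupBall f ψ m x ε :=
  rfl

theorem coverInf_mono (h : ∀ m x, g m x ≤ g' m x) :
    coverInf f Z n ε g ≤ coverInf f Z n ε g' := by
  refine le_sInf ?_
  rintro _ ⟨u, c, m, hm, hcov, rfl⟩
  exact sInf_le_of_le ⟨u, c, m, hm, hcov, rfl⟩ <| ENNReal.tsum_le_tsum fun i =>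
    ENNReal.ofReal_le_ofReal (Real.exp_le_exp.2 (h _ _))

theorem weightedCoverInf_mono (h : ∀ m x, g m x ≤ g' m x) :
    weightedCoverInf f Z n ε g ≤ weightedCoverInf f Z n ε g' := by
  refine le_sInf ?_
  rintro _ ⟨u, cx, m, c, hc, hm, hcov, rfl⟩
  exact sInf_le_of_le ⟨u, cx, m, c, hc, hm, hcov, rfl⟩ <| ENNReal.tsum_le_tsum fun i =>
    mul_le_mul_right (ENNReal.ofReal_le_ofReal (Real.exp_le_exp.2 (h _ _))) _

theorem coverInf_anti_radius (h : ε ≤ ε') : coverInf f Z n ε' g ≤ coverInf f Z n ε g := by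
  refine le_sInf ?_
  rintro _ ⟨u, c, m, hm, hcov, rfl⟩
  exact sInf_le ⟨u, c, m, hm, hcov.trans (iUnion₂_mono fun i _ => bowenBall_mono h), rfl⟩

theorem weightedCoverInf_anti_radius (h : ε ≤ ε') :
    weightedCoverInf f Z n ε' g ≤ weightedCoverInf f Z n ε g := by
  refine le_sInf ?_
  rintro _ ⟨u, cx, m, c, hc, hm, hcov, rfl⟩
  refine sInf_le ⟨u, cx, m, c, hc, hm, fun z hz => (hcov z hz).trans ?_, rfl⟩
  exact ENNReal.tsum_le_tsum fun i =>
    indicator_le_indicator_of_subset (bowenBall_mono h) (fun _ => zero_le) z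

theorem weightedCoverInf_le_coverInf : weightedCoverInf f Z n ε g ≤ coverInf f Z n ε g := by
  refine le_sInf ?_
  rintro _ ⟨u, c, m, hm, hcov, rfl⟩
  refine sInf_le_of_le ⟨u, c, m, fun _ => 1, fun _ _ => one_pos, hm, fun z hz => ?_, rfl⟩
    (by simp)
  obtain ⟨i, hi, hzi⟩ := mem_iUnion₂.1 (hcov hz)
  calc (1 : ℝ≥0∞) = (bowenBall f (m i) (c i) ε).indicator (fun _ => ENNReal.ofReal 1) z := by
        simp [indicator_of_mem hzi]
    _ ≤ _ := ENNReal.le_tsum (⟨i, hi⟩ : u)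

end CoverInf

section MassDistribution

theorem measure_le_tsum_mul_of_weighted_cover {α ι : Type*} [MeasurableSpace α] [Countable ι]
    (μ : Measure α) {A : Set α} {B : ι → Set α} {w : ι → ℝ≥0∞}
    (hA : ∀ z ∈ A, 1 ≤ ∑' i, (B i).indicator (fun _ => w i) z) :
    μ A ≤ ∑' i, w i * μ (B i) := by
  -- Markov's inequality, applied after replacing each `B i` by its measurable hull
  have hmeas : ∀ i, Measurable ((toMeasurable μ (B i)).indicator fun _ => w i) := fun i =>
    measurable_const.indicator (measurableSet_toMeasurable μ _)
  set g : α → ℝ≥0∞ := fun z => ∑' i, (toMeasurable μ (B i)).indicator (fun _ => w i) z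
  have hAg : A ⊆ {z | 1 ≤ g z} := fun z hz => (hA z hz).trans <| ENNReal.tsum_le_tsum fun i =>
    indicator_le_indicator_of_subset (subset_toMeasurable μ _) (fun _ => zero_le) z
  calc μ A ≤ μ {z | 1 ≤ g z} := measure_mono hAg
    _ ≤ ∫⁻ z, g z ∂μ := by
      simpa using mul_meas_ge_le_lintegral₀ (Measurable.tsum hmeas).aemeasurable (μ := μ) 1
    _ = ∑' i, w i * μ (B i) := by
      rw [lintegral_tsum fun i => (hmeas i).aemeasurable]
      simp only [lintegral_indicator_const (measurableSet_toMeasurable μ _), measure_toMeasurable]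

variable {X : Type} [MetricSpace X] [MeasurableSpace X] {f : ℕ → X → X} {Z Z₀ : Set X} {n : ℕ}
  {ε : ℝ} {g : ℕ → X → ℝ}

theorem measure_le_weightedCoverInf (μ : Measure X) (hZ₀ : Z₀ ⊆ Z)
    (h : ∀ m ≥ n, ∀ x, ∀ z ∈ Z₀, z ∈ bowenBall f m x ε →
      μ (bowenBall f m x ε) ≤ ENNReal.ofReal (Real.exp (g m x))) :
    μ Z₀ ≤ weightedCoverInf f Z n ε g := by
  refine le_sInf ?_
  rintro _ ⟨u, cx, m, c, -, hm, hcov, rfl⟩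
  -- intersecting with `Z₀` discards the balls that carry no mass of `Z₀`
  have hcov₀ : ∀ z ∈ Z₀, 1 ≤ ∑' i : u,
      (bowenBall f (m i) (cx i) ε ∩ Z₀).indicator (fun _ => ENNReal.ofReal (c i)) z := by
    intro z hz
    convert hcov z (hZ₀ hz) using 3 with i
    by_cases hzi : z ∈ bowenBall f (m i) (cx i) ε <;> simp [indicator, hzi, hz]
  refine (measure_le_tsum_mul_of_weighted_cover μ hcov₀).trans <|
    ENNReal.tsum_le_tsum fun i => mul_le_mul_right ?_ _
  rcases (bowenBall f (m i) (cx i) ε ∩ Z₀).eq_empty_or_nonempty with he | ⟨z, hzi, hz⟩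
  · simp [he]
  · exact (measure_mono inter_subset_left).trans (h _ (hm i i.2) _ z hz hzi)

end MassDistribution

section Pressure

variable {X : Type} [MetricSpace X] {f : ℕ → X → X} {ψ : X → ℝ} {Z : Set X}

noncomputable def WlimC (f : ℕ → X → X) (ψ : X → ℝ) (Z : Set X) (α ε : ℝ) : ℝ≥0∞ :=
  ⨆ n : ℕ, weightedCoverInf f Z n ε fun m x => -α * m + birkSum f ψ m x

theorem tendsto_PBeps [CompactSpace X] (hψ : Continuous ψ) :
    Tendsto (PBeps f ψ Z) (𝓝[>] 0) (𝓝 (sSup (PBCeps f ψ Z '' Ioi 0))) := by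
  have hbdd : BddAbove (range ψ) := (isCompact_range hψ).bddAbove
  refine tendsto_critValue (L := fun ε α => Mlim f ψ Z α ε) (LC := fun ε α => MlimC f ψ Z α ε)
    (fun ε hε α => iSup_mono fun n => ?_) (fun η hη => ?_)
    (fun α ε ε' h => iSup_mono fun n => by
      simp only [MpreC_eq_coverInf]
      exact coverInf_anti_radius h)
  · rw [MpreC_eq_coverInf, Mpre_eq_coverInf]
    exact coverInf_mono fun m x => by
      gcongr
      exact birkSum_le_birkSupBall hbdd (mem_bowenBall_self hε)
  · filter_upwards [eventually_birkSupBall_le_birkSum_add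
      (CompactSpace.uniformContinuous_of_continuous hψ) hη] with ε hε α
    refine iSup_mono fun n => ?_
    rw [MpreC_eq_coverInf, Mpre_eq_coverInf]
    exact coverInf_mono fun m x => by linarith [hε m x]

theorem tendsto_PWeps [CompactSpace X] (hψ : Continuous ψ) :
    Tendsto (PWeps f ψ Z) (𝓝[>] 0)
      (𝓝 (sSup ((fun ε => critValue fun α => WlimC f ψ Z α ε) '' Ioi 0))) := by
  have hbdd : BddAbove (range ψ) := (isCompact_range hψ).bddAbove
  refine tendsto_critValue (L := fun ε α => Wlim f ψ Z α ε) (LC := fun ε α => WlimC f ψ Z α ε)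
    (fun ε hε α => iSup_mono fun n => ?_) (fun η hη => ?_)
    (fun α ε ε' h => iSup_mono fun n => weightedCoverInf_anti_radius h)
  · rw [Wpre_eq_weightedCoverInf]
    exact weightedCoverInf_mono fun m x => by
      gcongr
      exact birkSum_le_birkSupBall hbdd (mem_bowenBall_self hε)
  · filter_upwards [eventually_birkSupBall_le_birkSum_add
      (CompactSpace.uniformContinuous_of_continuous hψ) hη] with ε hε α
    refine iSup_mono fun n => ?_
    rw [Wpre_eq_weightedCoverInf]
    exact weightedCoverInf_mono fun m x => by linarith [hε m x]

theorem PWeps_le_PBeps {ε : ℝ} : PWeps f ψ Z ε ≤ PBeps f ψ Z ε :=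
  critValue_mono fun α => iSup_mono fun n => by
    rw [Wpre_eq_weightedCoverInf, Mpre_eq_coverInf]
    exact weightedCoverInf_le_coverInf

theorem le_PWeps [MeasurableSpace X] {μ : Measure X} (hψ : BddAbove (range ψ)) {Z₀ : Set X}
    (hZ₀ : Z₀ ⊆ Z) (hpos : 0 < μ Z₀) {c ε₀ ε : ℝ} {N : ℕ}
    (hZ₀N : ∀ z ∈ Z₀, ∀ n ≥ N,
      μ (bowenBall f n z ε₀) ≤ ENNReal.ofReal (Real.exp (-c * n + birkSum f ψ n z)))
    (hεε₀ : 2 * ε ≤ ε₀) : (c : EReal) ≤ PWeps f ψ Z ε := by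
  refine le_sInf ?_
  rintro _ ⟨α, hα, rfl⟩
  by_contra! hαc
  have hαc : α ≤ c := (EReal.coe_lt_coe_iff.1 hαc).le
  have hW : μ Z₀ ≤ Wpre f ψ Z N α ε := by
    rw [Wpre_eq_weightedCoverInf]
    refine measure_le_weightedCoverInf μ hZ₀ fun m hm x z hz hzx => ?_
    calc μ (bowenBall f m x ε) ≤ μ (bowenBall f m z ε₀) :=
          measure_mono ((bowenBall_subset_bowenBall_two_mul hzx).trans (bowenBall_mono hεε₀))
      _ ≤ ENNReal.ofReal (Real.exp (-c * m + birkSum f ψ m z)) := hZ₀N z hz m hm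
      _ ≤ ENNReal.ofReal (Real.exp (-α * m + birkSupBall f ψ m x ε)) := by
        gcongr ENNReal.ofReal (Real.exp ?_)
        nlinarith [birkSum_le_birkSupBall hψ hzx, (Nat.cast_nonneg m : (0 : ℝ) ≤ m)]
  exact hpos.ne' (le_zero_iff.1 (hα ▸ hW.trans (le_iSup (fun n => Wpre f ψ Z n α ε) N)))

end Pressure

section LocalPressure

variable {X : Type} [MetricSpace X] [MeasurableSpace X] {f : ℕ → X → X} {ψ : X → ℝ}
  {μ : Measure X} {Z : Set X} {x : X} {s c : ℝ}

noncomputable def PlocEps (f : ℕ → X → X) (μ : Measure X) (ψ : X → ℝ) (x : X) (ε : ℝ) :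
    EReal :=
  Filter.atTop.liminf fun n : ℕ =>
    (((n : ℝ)⁻¹ : ℝ) : EReal) *
      (-(ENNReal.log (μ (bowenBall f n x ε))) + ((birkSum f ψ n x : ℝ) : EReal))

theorem antitone_PlocEps : Antitone (PlocEps f μ ψ x) := by
  intro ε ε' h
  refine liminf_le_liminf (Eventually.of_forall fun n => ?_)
  gcongr
  exact EReal.neg_le_neg_iff.2 (ENNReal.log_monotone (measure_mono (bowenBall_mono h)))

theorem tendsto_PlocEps :
    Tendsto (PlocEps f μ ψ x) (𝓝[>] 0) (𝓝 (Ploc f μ ψ x)) := by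
  have h := antitone_PlocEps.tendsto_nhdsGT (f := PlocEps f μ ψ x) 0
  rwa [← h.limUnder_eq] at h

theorem le_ofReal_exp_of_lt_inv_mul {B : ℝ≥0∞} {t S : ℝ} (ht : 0 < t)
    (h : (c : EReal) < ((t⁻¹ : ℝ) : EReal) * (-(ENNReal.log B) + (S : EReal))) :
    B ≤ ENNReal.ofReal (Real.exp (-c * t + S)) := by
  rw [← ENNReal.log_le_log_iff, ENNReal.log_ofReal_of_pos (Real.exp_pos _), Real.log_exp]
  generalize ENNReal.log B = l at h ⊢
  induction l using EReal.rec with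
  | bot => exact bot_le
  | top => simp [EReal.mul_bot_of_pos (EReal.coe_pos.2 (inv_pos.2 ht))] at h
  | coe r =>
    rw [← EReal.coe_neg, ← EReal.coe_add, ← EReal.coe_mul, EReal.coe_lt_coe_iff,
      lt_inv_mul_iff₀ ht] at h
    exact EReal.coe_le_coe_iff.2 (by nlinarith)

theorem exists_eventually_measure_bowenBall_le (hx : (s : EReal) ≤ Ploc f μ ψ x) (hc : c < s) :
    ∃ ε > 0, ∀ᶠ n in atTop,
      μ (bowenBall f n x ε) ≤ ENNReal.ofReal (Real.exp (-c * n + birkSum f ψ n x)) := by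
  have hlt : (c : EReal) < Ploc f μ ψ x := (EReal.coe_lt_coe_iff.2 hc).trans_le hx
  obtain ⟨ε, hcε, hε⟩ :=
    ((tendsto_PlocEps.eventually (eventually_gt_nhds hlt)).and self_mem_nhdsWithin).exists
  refine ⟨ε, hε, ?_⟩
  filter_upwards [eventually_lt_of_lt_liminf hcε, eventually_gt_atTop 0] with n hn hn0
  exact le_ofReal_exp_of_lt_inv_mul (Nat.cast_pos.2 hn0) hn

theorem exists_measure_pos_forall_measure_bowenBall_le
    (h : ∀ x ∈ Z, (s : EReal) ≤ Ploc f μ ψ x) (hμZ : 0 < μ Z) (hc : c < s) :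
    ∃ ε₀ > 0, ∃ N : ℕ, ∃ Z₀ ⊆ Z, 0 < μ Z₀ ∧ ∀ z ∈ Z₀, ∀ n ≥ N,
      μ (bowenBall f n z ε₀) ≤ ENNReal.ofReal (Real.exp (-c * n + birkSum f ψ n z)) := by
  set Zk : ℕ → ℕ → Set X := fun k N => {z ∈ Z | ∀ n ≥ N,
    μ (bowenBall f n z (1 / (k + 1))) ≤ ENNReal.ofReal (Real.exp (-c * n + birkSum f ψ n z))}
  have hcover : Z ⊆ ⋃ k, ⋃ N, Zk k N := by
    intro z hz
    obtain ⟨ε, hε, hev⟩ := exists_eventually_measure_bowenBall_le (h z hz) hc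
    obtain ⟨k, hk⟩ := exists_nat_one_div_lt hε
    obtain ⟨N, hN⟩ := eventually_atTop.1 hev
    exact mem_iUnion₂.2 ⟨k, N, hz, fun n hn => (measure_mono (bowenBall_mono hk.le)).trans (hN n hn)⟩
  obtain ⟨k, N, hpos⟩ : ∃ k N, 0 < μ (Zk k N) := by
    by_contra! hnull
    exact hμZ.ne' (measure_mono_null hcover
      (measure_iUnion_null fun k => measure_iUnion_null fun N => le_zero_iff.1 (hnull k N)))
  exact ⟨1 / (k + 1), Nat.one_div_pos_of_nat, N, Zk k N, fun z hz => hz.1, hpos, fun z hz => hz.2⟩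

end LocalPressure

variable {X : Type} [MetricSpace X] [MeasurableSpace X]

theorem statement1_general [CompactSpace X]
    (f : ℕ → X → X) (ψ : X → ℝ) (hψ : Continuous ψ)
    (μ : Measure X) (Z : Set X) (s : ℝ)
    (h : ∀ x ∈ Z, (s : EReal) ≤ Ploc f μ ψ x) (hμZ : 0 < μ Z) :
    (s : EReal) ≤ PB f ψ Z ∧ (s : EReal) ≤ PW f ψ Z := by
  have hlower : ∀ c : ℝ, (c : EReal) < s → ∀ᶠ ε in 𝓝[>] 0, (c : EReal) ≤ PWeps f ψ Z ε := by
    intro c hc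
    obtain ⟨ε₀, hε₀, N, Z₀, hZ₀, hpos, hZ₀N⟩ :=
      exists_measure_pos_forall_measure_bowenBall_le h hμZ (EReal.coe_lt_coe_iff.1 hc)
    filter_upwards [Ioc_mem_nhdsGT (half_pos hε₀)] with ε hε
    exact le_PWeps (isCompact_range hψ).bddAbove hZ₀ hpos hZ₀N (by linarith [hε.2])
  have hB := tendsto_PBeps (f := f) (Z := Z) hψ
  have hW := tendsto_PWeps (f := f) (Z := Z) hψ
  constructor
  · rw [PB, hB.limUnder_eq]
    refine EReal.ge_of_forall_gt_iff_ge.1 fun c hc => ge_of_tendsto hB ?_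
    exact (hlower c hc).mono fun ε hε => hε.trans PWeps_le_PBeps
  · rw [PW, hW.limUnder_eq]
    exact EReal.ge_of_forall_gt_iff_ge.1 fun c hc => ge_of_tendsto hW (hlower c hc)

/-- If `P_μ(x,ψ) ≥ s` for all `x ∈ Z` and `μ(Z) > 0`, then the Pesin–Pitskel
and weighted topological pressures of `Z` are at least `s`. -/
theorem statement1 [CompactSpace X] [BorelSpace X]
    (f : ℕ → X → X) (hf : ∀ n, Continuous (f n)) (ψ : X → ℝ) (hψ : Continuous ψ)
    (μ : Measure X) [IsProbabilityMeasure μ] (Z : Set X) (s : ℝ)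
    (h : ∀ x ∈ Z, (s : EReal) ≤ Ploc f μ ψ x) (hμZ : 0 < μ Z) :
    (s : EReal) ≤ PB f ψ Z ∧ (s : EReal) ≤ PW f ψ Z :=
  statement1_general f ψ hψ μ Z s h hμZ
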